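/- The mixed proper Gramian P̃_p := ∫₀^∞ F_J(t)·B·B̂^T·F̂_J(t)^T dt is well defined and solves the projected Sylvester equation A·P̃_p·Ê^T + E·P̃_p·Â^T = −P_l·B·B̂^T·P̂_l^T together with the projection condition P̃_p = P_r·P̃_p·P̂_r^T. -/

import Mathlib

open MeasureTheory Matrix

/-- The matrix exponential of a real square matrix. -/
noncomputable def mexp {d : ℕ} (X : Matrix (Fin d) (Fin d) ℝ) : Matrix (Fin d) (Fin d) ℝ :=
  NormedSpace.exp X

/-- The operator norm on real matrices, induced by the Euclidean (`ℓ²`) norms. -/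
noncomputable def opNorm {d e : ℕ} (X : Matrix (Fin d) (Fin e) ℝ) : ℝ :=
  letI := Matrix.instL2OpNormedAddCommGroup (m := Fin d) (n := Fin e) (𝕜 := ℝ)
  ‖X‖

/-- Entrywise integral over `(0, ∞)` of a matrix-valued function. -/
noncomputable def matIntIoi {a b : Type*} (F : ℝ → Matrix a b ℝ) : Matrix a b ℝ :=
  Matrix.of fun i j => ∫ t in Set.Ioi (0:ℝ), F t i j

/-- Entrywise integrability over `(0, ∞)` of a matrix-valued function. -/
def MatIntegrableIoi {a b : Type*} (F : ℝ → Matrix a b ℝ) : Prop :=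
  ∀ i j, MeasureTheory.IntegrableOn (fun t => F t i j) (Set.Ioi 0)

/-- Kronecker product of two vectors in `ℝ^m`, an element of `ℝ^{m²}`. -/
def kron {m : ℕ} (a b : Fin m → ℝ) : Fin m × Fin m → ℝ := fun p => a p.1 * b p.2

/-- Vectorization of an `m × m` matrix as an element of `ℝ^{m²}`. -/
def vecm {m : ℕ} (X : Matrix (Fin m) (Fin m) ℝ) : Fin m × Fin m → ℝ := fun p => X p.1 p.2

/-- Squared Euclidean norm of a vector. -/
def enormSq {ι : Type*} [Fintype ι] (v : ι → ℝ) : ℝ := ∑ i, (v i) ^ 2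

/-- Euclidean inner product of two vectors. -/
def dotv {ι : Type*} [Fintype ι] (v w : ι → ℝ) : ℝ := ∑ i, v i * w i

/-! In Weierstraß coordinates the integrand is `T⁻¹ Y(t)` with
`Y(t) = diag(e^{tJ}, 0) U diag(e^{tÂ₁}, 0)ᵀ` and `U = W⁻¹ B B̂ᵀ`. Its entries are
`O(e^{-(α+α̂)t})`, so it is integrable, and `Y' = diag(J, I) Y + Y diag(Â₁, I)ᵀ`; integrating
over `(0, ∞)` gives `diag(J, I) P + P diag(Â₁, I)ᵀ = -Y(0)` for `P = ∫ Y`. Since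
`diag(I, N) Y = Y = Y diag(I, Ẽ₂)ᵀ`, multiplying by `W` (and cancelling `T T⁻¹`) turns this into
the projected Sylvester equation; likewise `P_r T⁻¹ Y P̂_rᵀ = T⁻¹ Y` gives the projection
identity. -/
open Filter Topology Asymptotics

lemma abs_apply_le_opNorm {d e : ℕ} (X : Matrix (Fin d) (Fin e) ℝ) (i : Fin d) (j : Fin e) :
    |X i j| ≤ opNorm X := by
  let := Matrix.instL2OpNormedAddCommGroup (m := Fin d) (n := Fin e) (𝕜 := ℝ)
  have h := X.l2_opNorm_mulVec (EuclideanSpace.single j 1)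
  rw [PiLp.norm_single, norm_one, mul_one] at h
  refine le_trans ?_ h
  simpa [Matrix.mulVec_single_one] using PiLp.norm_apply_le
    ((EuclideanSpace.equiv (Fin d) ℝ).symm (X *ᵥ EuclideanSpace.single j 1)) i

lemma isBigO_apply_of_opNorm_le {d e : ℕ} {l : Filter ℝ} {X : ℝ → Matrix (Fin d) (Fin e) ℝ}
    {f : ℝ → ℝ} {C : ℝ} (hX : ∀ᶠ t in l, opNorm (X t) ≤ C * f t) (hf : ∀ᶠ t in l, 0 ≤ f t)
    (i : Fin d) (j : Fin e) :
    (fun t => X t i j) =O[l] f :=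
  IsBigO.of_bound C <| (hX.and hf).mono fun t ⟨hXt, hft⟩ => by
    rw [Real.norm_eq_abs, Real.norm_of_nonneg hft]
    exact (abs_apply_le_opNorm _ i j).trans hXt

lemma hasDerivAt_mexp_smul_apply {d : ℕ} (X : Matrix (Fin d) (Fin d) ℝ) (t : ℝ) (a b : Fin d) :
    HasDerivAt (fun u : ℝ => mexp (u • X) a b) ((X * mexp (t • X)) a b) t := by
  -- any Banach-algebra norm will do, as `NormedSpace.exp` does not depend on it
  let := Matrix.linftyOpNormedRing (n := Fin d) (α := ℝ)
  let := Matrix.linftyOpNormedAlgebra (n := Fin d) (R := ℝ) (α := ℝ)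
  exact (Matrix.entryLinearMap ℝ ℝ a b).toContinuousLinearMap.hasFDerivAt.comp_hasDerivAt t
    (hasDerivAt_exp_smul_const' X t)

section Entrywise

variable {l m n p : Type*}

lemma hasDerivAt_mul_apply [Fintype m] {F : ℝ → Matrix l m ℝ} {G : ℝ → Matrix m n ℝ}
    {F' : Matrix l m ℝ} {G' : Matrix m n ℝ} {t : ℝ}
    (hF : ∀ i k, HasDerivAt (fun u => F u i k) (F' i k) t)
    (hG : ∀ k j, HasDerivAt (fun u => G u k j) (G' k j) t) (i : l) (j : n) :
    HasDerivAt (fun u => (F u * G u) i j) ((F' * G t + F t * G') i j) t := by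
  simp only [mul_apply, Matrix.add_apply, ← Finset.sum_add_distrib]
  exact HasDerivAt.fun_sum (A := fun k u => F u i k * G u k j) fun k _ => (hF i k).mul (hG k j)

lemma hasDerivAt_mul_const_mul_apply [Fintype m] [Fintype n] {F : ℝ → Matrix l m ℝ}
    {G : ℝ → Matrix n p ℝ} {F' : Matrix l m ℝ} {G' : Matrix n p ℝ} {t : ℝ} (U : Matrix m n ℝ)
    (hF : ∀ i k, HasDerivAt (fun u => F u i k) (F' i k) t)
    (hG : ∀ k j, HasDerivAt (fun u => G u k j) (G' k j) t) (i : l) (j : p) :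
    HasDerivAt (fun u => (F u * U * G u) i j) ((F' * U * G t + F t * U * G') i j) t := by
  have hFU (i : l) (k : n) : HasDerivAt (fun u => (F u * U) i k) ((F' * U) i k) t := by
    simpa using hasDerivAt_mul_apply (G' := 0) hF (fun k j => hasDerivAt_const t (U k j)) i k
  exact hasDerivAt_mul_apply hFU hG i j

lemma isBigO_mul_mul_transpose_apply [Fintype m] [Fintype n] {α : Type*} {L : Filter α}
    {P : α → Matrix l m ℝ} {Q : α → Matrix p n ℝ} {f g : α → ℝ} (U : Matrix m n ℝ)
    (hP : ∀ i k, (fun x => P x i k) =O[L] f) (hQ : ∀ j k, (fun x => Q x j k) =O[L] g)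
    (i : l) (j : p) :
    (fun x => (P x * U * (Q x)ᵀ) i j) =O[L] fun x => f x * g x := by
  simp only [mul_apply, transpose_apply, Finset.sum_mul]
  refine IsBigO.fun_sum fun k' _ => IsBigO.fun_sum fun k _ => ?_
  exact (((hP i k).mul (hQ j k')).const_mul_left (U k k')).congr_left fun x => by ring

end Entrywise

section MatIntIoi

variable {l m n : Type*}

lemma MatIntegrableIoi.const_mul [Fintype m] {F : ℝ → Matrix m n ℝ} (hF : MatIntegrableIoi F)
    (L : Matrix l m ℝ) : MatIntegrableIoi fun t => L * F t := fun i j => by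
  simp only [MatIntegrableIoi, IntegrableOn, mul_apply] at hF ⊢
  exact integrable_finsetSum _ fun k _ => (hF k j).const_mul _

lemma MatIntegrableIoi.mul_const [Fintype m] {F : ℝ → Matrix l m ℝ} (hF : MatIntegrableIoi F)
    (R : Matrix m n ℝ) : MatIntegrableIoi fun t => F t * R := fun i j => by
  simp only [MatIntegrableIoi, IntegrableOn, mul_apply] at hF ⊢
  exact integrable_finsetSum _ fun k _ => (hF i k).mul_const _

lemma MatIntegrableIoi.add {F G : ℝ → Matrix m n ℝ} (hF : MatIntegrableIoi F)
    (hG : MatIntegrableIoi G) : MatIntegrableIoi fun t => F t + G t :=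
  fun i j => (hF i j).add (hG i j)

lemma matIntIoi_const_mul [Fintype m] {F : ℝ → Matrix m n ℝ} (hF : MatIntegrableIoi F)
    (L : Matrix l m ℝ) : matIntIoi (fun t => L * F t) = L * matIntIoi F := by
  ext i j
  simp only [matIntIoi, of_apply, mul_apply]
  rw [integral_finsetSum _ fun k _ => (hF k j).const_mul _]
  simp only [integral_const_mul]

lemma matIntIoi_mul_const [Fintype m] {F : ℝ → Matrix l m ℝ} (hF : MatIntegrableIoi F)
    (R : Matrix m n ℝ) : matIntIoi (fun t => F t * R) = matIntIoi F * R := by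
  ext i j
  simp only [matIntIoi, of_apply, mul_apply]
  rw [integral_finsetSum _ fun k _ => (hF i k).mul_const _]
  simp only [integral_mul_const]

lemma matIntIoi_add {F G : ℝ → Matrix m n ℝ} (hF : MatIntegrableIoi F) (hG : MatIntegrableIoi G) :
    matIntIoi (fun t => F t + G t) = matIntIoi F + matIntIoi G := by
  ext i j
  exact integral_add (hF i j) (hG i j)

lemma matIntIoi_eq_neg_of_hasDerivAt {F F' : ℝ → Matrix m n ℝ}
    (hderiv : ∀ t ≥ 0, ∀ i j, HasDerivAt (fun u => F u i j) (F' t i j) t)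
    (hF' : MatIntegrableIoi F') (hlim : ∀ i j, Tendsto (fun t => F t i j) atTop (𝓝 0)) :
    matIntIoi F' = -F 0 := by
  ext i j
  simpa [matIntIoi] using
    integral_Ioi_of_hasDerivAt_of_tendsto' (fun t ht => hderiv t ht i j) (hF' i j) (hlim i j)

end MatIntIoi

lemma fromBlocks_mul_fromBlocks_zero {k k' m l n p : Type*} [Fintype m] [Fintype l]
    (X : Matrix k m ℝ) (Z : Matrix k' l ℝ) (Y : Matrix m n ℝ) :
    fromBlocks X 0 0 Z * fromBlocks Y 0 0 (0 : Matrix l p ℝ) = fromBlocks (X * Y) 0 0 0 := by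
  simp [fromBlocks_multiply]

section BlockExp

variable {d d' : ℕ}

/-- `F_J(t)` in Weierstraß coordinates. -/
noncomputable def blockExp (X : Matrix (Fin d) (Fin d) ℝ) (t : ℝ) :
    Matrix (Fin d ⊕ Fin d') (Fin d ⊕ Fin d') ℝ :=
  fromBlocks (mexp (t • X)) 0 0 0

lemma blockExp_zero (X : Matrix (Fin d) (Fin d) ℝ) :
    (blockExp X 0 : Matrix (Fin d ⊕ Fin d') _ _) = fromBlocks 1 0 0 0 := by
  rw [blockExp, zero_smul, mexp, NormedSpace.exp_zero]

lemma fromBlocks_one_mul_blockExp (Z : Matrix (Fin d') (Fin d') ℝ)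
    (X : Matrix (Fin d) (Fin d) ℝ) (t : ℝ) :
    fromBlocks (1 : Matrix (Fin d) (Fin d) ℝ) 0 0 Z * blockExp X t = blockExp X t := by
  rw [blockExp, fromBlocks_mul_fromBlocks_zero, Matrix.one_mul]

lemma hasDerivAt_blockExp_apply (X : Matrix (Fin d) (Fin d) ℝ) (t : ℝ)
    (i j : Fin d ⊕ Fin d') :
    HasDerivAt (fun u => blockExp X u i j)
      ((fromBlocks X 0 0 1 * blockExp X t : Matrix (Fin d ⊕ Fin d') (Fin d ⊕ Fin d') ℝ) i j) t := by
  rw [blockExp, fromBlocks_mul_fromBlocks_zero]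
  rcases i with i | i <;> rcases j with j | j
  · exact hasDerivAt_mexp_smul_apply X t i j
  all_goals exact hasDerivAt_const t 0

lemma isBigO_blockExp_apply {X : Matrix (Fin d) (Fin d) ℝ} {C α : ℝ}
    (hX : ∀ t ≥ 0, opNorm (mexp (t • X)) ≤ C * Real.exp (-α * t)) (i j : Fin d ⊕ Fin d') :
    (fun t => blockExp X t i j) =O[atTop] fun t => Real.exp (-α * t) := by
  rcases i with i | i <;> rcases j with j | j
  · exact isBigO_apply_of_opNorm_le (eventually_ge_atTop 0 |>.mono hX)
      (.of_forall fun t => (Real.exp_pos _).le) i j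
  all_goals exact isBigO_zero _ _

end BlockExp

section MixedGramian

variable {nf ni rf ri : ℕ} (J : Matrix (Fin nf) (Fin nf) ℝ) (K : Matrix (Fin rf) (Fin rf) ℝ)
  (U : Matrix (Fin nf ⊕ Fin ni) (Fin rf ⊕ Fin ri) ℝ)

/-- The integrand of the mixed proper Gramian in Weierstraß coordinates, `U` standing for
`W⁻¹ B B̂ᵀ`. -/
noncomputable def mixedIntegrand (t : ℝ) : Matrix (Fin nf ⊕ Fin ni) (Fin rf ⊕ Fin ri) ℝ :=
  blockExp (d' := ni) J t * U * (blockExp (d' := ri) K t)ᵀ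

lemma hasDerivAt_mixedIntegrand_apply (t : ℝ) (i : Fin nf ⊕ Fin ni) (j : Fin rf ⊕ Fin ri) :
    HasDerivAt (fun u => mixedIntegrand J K U u i j)
      ((fromBlocks J 0 0 (1 : Matrix (Fin ni) (Fin ni) ℝ) * mixedIntegrand J K U t
        + mixedIntegrand J K U t * (fromBlocks K 0 0 (1 : Matrix (Fin ri) (Fin ri) ℝ))ᵀ) i j)
      t := by
  have h := hasDerivAt_mul_const_mul_apply U (hasDerivAt_blockExp_apply J t)
    (G := fun u => (blockExp K u)ᵀ) (G' := (fromBlocks K 0 0 1 * blockExp K t)ᵀ)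
    (fun k j => hasDerivAt_blockExp_apply K t j k) i j
  simpa only [mixedIntegrand, transpose_mul, Matrix.mul_assoc] using h

lemma isBigO_mixedIntegrand_apply {C α Cr αr : ℝ}
    (hJ : ∀ t ≥ 0, opNorm (mexp (t • J)) ≤ C * Real.exp (-α * t))
    (hK : ∀ t ≥ 0, opNorm (mexp (t • K)) ≤ Cr * Real.exp (-αr * t))
    (i : Fin nf ⊕ Fin ni) (j : Fin rf ⊕ Fin ri) :
    (fun t => mixedIntegrand J K U t i j) =O[atTop] fun t => Real.exp (-(α + αr) * t) :=
  (isBigO_mul_mul_transpose_apply U (isBigO_blockExp_apply hJ) (isBigO_blockExp_apply hK) i j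
    ).congr_right fun t => by rw [← Real.exp_add]; ring_nf

lemma matIntegrableIoi_mixedIntegrand {C α Cr αr : ℝ} (hα : 0 < α) (hαr : 0 < αr)
    (hJ : ∀ t ≥ 0, opNorm (mexp (t • J)) ≤ C * Real.exp (-α * t))
    (hK : ∀ t ≥ 0, opNorm (mexp (t • K)) ≤ Cr * Real.exp (-αr * t)) :
    MatIntegrableIoi (mixedIntegrand J K U) := fun i j =>
  integrable_of_isBigO_exp_neg (add_pos hα hαr)
    (continuous_iff_continuousAt.2 fun t =>
      (hasDerivAt_mixedIntegrand_apply J K U t i j).continuousAt).continuousOn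
    (isBigO_mixedIntegrand_apply J K U hJ hK i j)

lemma fromBlocks_one_mul_mixedIntegrand (Z : Matrix (Fin ni) (Fin ni) ℝ) (t : ℝ) :
    fromBlocks (1 : Matrix (Fin nf) (Fin nf) ℝ) 0 0 Z * mixedIntegrand J K U t =
      mixedIntegrand J K U t := by
  simp only [mixedIntegrand, ← Matrix.mul_assoc, fromBlocks_one_mul_blockExp]

lemma mixedIntegrand_mul_fromBlocks_one_transpose (Z : Matrix (Fin ri) (Fin ri) ℝ) (t : ℝ) :
    mixedIntegrand J K U t * (fromBlocks (1 : Matrix (Fin rf) (Fin rf) ℝ) 0 0 Z)ᵀ =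
      mixedIntegrand J K U t := by
  rw [mixedIntegrand, Matrix.mul_assoc, ← transpose_mul, fromBlocks_one_mul_blockExp]

lemma fromBlocks_one_mul_matIntIoi_mixedIntegrand
    (hint : MatIntegrableIoi (mixedIntegrand J K U)) (Z : Matrix (Fin ni) (Fin ni) ℝ) :
    fromBlocks (1 : Matrix (Fin nf) (Fin nf) ℝ) 0 0 Z * matIntIoi (mixedIntegrand J K U) =
      matIntIoi (mixedIntegrand J K U) := by
  simp only [← matIntIoi_const_mul hint, fromBlocks_one_mul_mixedIntegrand]

lemma matIntIoi_mixedIntegrand_mul_fromBlocks_one_transpose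
    (hint : MatIntegrableIoi (mixedIntegrand J K U)) (Z : Matrix (Fin ri) (Fin ri) ℝ) :
    matIntIoi (mixedIntegrand J K U) * (fromBlocks (1 : Matrix (Fin rf) (Fin rf) ℝ) 0 0 Z)ᵀ =
      matIntIoi (mixedIntegrand J K U) := by
  simp only [← matIntIoi_mul_const hint, mixedIntegrand_mul_fromBlocks_one_transpose]

/-- By the fundamental theorem of calculus, `∫₀^∞ Y' = -Y(0)`. -/
lemma matIntIoi_mixedIntegrand_sylvester {C α Cr αr : ℝ} (hα : 0 < α) (hαr : 0 < αr)
    (hJ : ∀ t ≥ 0, opNorm (mexp (t • J)) ≤ C * Real.exp (-α * t))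
    (hK : ∀ t ≥ 0, opNorm (mexp (t • K)) ≤ Cr * Real.exp (-αr * t)) :
    fromBlocks J 0 0 (1 : Matrix (Fin ni) (Fin ni) ℝ) * matIntIoi (mixedIntegrand J K U)
        + matIntIoi (mixedIntegrand J K U) * (fromBlocks K 0 0 (1 : Matrix (Fin ri) (Fin ri) ℝ))ᵀ
      = -mixedIntegrand J K U 0 := by
  have hint := matIntegrableIoi_mixedIntegrand J K U hα hαr hJ hK
  have hlim (i j) : Tendsto (fun t => mixedIntegrand J K U t i j) atTop (𝓝 0) :=
    (isBigO_mixedIntegrand_apply J K U hJ hK i j).trans_tendsto <|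
      (Real.tendsto_exp_neg_atTop_nhds_zero.comp
        (tendsto_id.const_mul_atTop (add_pos hα hαr))).congr
          fun t => by simp only [Function.comp_apply, id, neg_mul]
  rw [← matIntIoi_const_mul hint, ← matIntIoi_mul_const hint,
    ← matIntIoi_add (hint.const_mul _) (hint.mul_const _),
    matIntIoi_eq_neg_of_hasDerivAt (fun t _ => hasDerivAt_mixedIntegrand_apply J K U t)
      ((hint.const_mul _).add (hint.mul_const _)) hlim]

end MixedGramian

theorem mixed_proper_gramian_sylvester_general
    {nf ni m : ℕ}
    -- Weierstraß canonical form data for the full-order system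
    (W T Winv Tinv : Matrix (Fin nf ⊕ Fin ni) (Fin nf ⊕ Fin ni) ℝ)
    (hT : T * Tinv = 1)
    (J : Matrix (Fin nf) (Fin nf) ℝ) (N : Matrix (Fin ni) (Fin ni) ℝ)
    (C α : ℝ) (hα : 0 < α)
    (hJ : ∀ t : ℝ, 0 ≤ t → opNorm (mexp (t • J)) ≤ C * Real.exp (-α * t))
    (E A : Matrix (Fin nf ⊕ Fin ni) (Fin nf ⊕ Fin ni) ℝ)
    (hE : E = W * fromBlocks 1 0 0 N * T)
    (hA : A = W * fromBlocks J 0 0 1 * T)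
    (B : Matrix (Fin nf ⊕ Fin ni) (Fin m) ℝ)
    -- spectral projectors
    (Pr Pl : Matrix (Fin nf ⊕ Fin ni) (Fin nf ⊕ Fin ni) ℝ)
    (hPr : Pr = Tinv * fromBlocks 1 0 0 0 * T)
    (hPl : Pl = W * fromBlocks 1 0 0 0 * Winv)
    -- fundamental solution matrices
    (FJ : ℝ → Matrix (Fin nf ⊕ Fin ni) (Fin nf ⊕ Fin ni) ℝ)
    (hFJ : ∀ t : ℝ, FJ t = Tinv * fromBlocks (mexp (t • J)) 0 0 0 * Winv)
    -- reduced-order data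
    {rf ri : ℕ}
    (A1r : Matrix (Fin rf) (Fin rf) ℝ) (E2r : Matrix (Fin ri) (Fin ri) ℝ)
    (Cr αr : ℝ) (hαr : 0 < αr)
    (hA1r : ∀ t : ℝ, 0 ≤ t → opNorm (mexp (t • A1r)) ≤ Cr * Real.exp (-αr * t))
    (Br : Matrix (Fin rf ⊕ Fin ri) (Fin m) ℝ)
    (FJr : ℝ → Matrix (Fin rf ⊕ Fin ri) (Fin rf ⊕ Fin ri) ℝ)
    (hFJr : ∀ t : ℝ, FJr t = fromBlocks (mexp (t • A1r)) 0 0 0)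
    -- reduced-order matrices and projectors
    (Er Ar : Matrix (Fin rf ⊕ Fin ri) (Fin rf ⊕ Fin ri) ℝ)
    (hEr : Er = fromBlocks 1 0 0 E2r) (hAr : Ar = fromBlocks A1r 0 0 1)
    (Plr Prr : Matrix (Fin rf ⊕ Fin ri) (Fin rf ⊕ Fin ri) ℝ)
    (hPlr : Plr = fromBlocks 1 0 0 0) (hPrr : Prr = fromBlocks 1 0 0 0)
    -- the mixed proper Gramian
    (Ptp : Matrix (Fin nf ⊕ Fin ni) (Fin rf ⊕ Fin ri) ℝ)
    (hPtp : Ptp = matIntIoi fun t => FJ t * B * Brᵀ * (FJr t)ᵀ) :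
    MatIntegrableIoi (fun t => FJ t * B * Brᵀ * (FJr t)ᵀ) ∧
      A * Ptp * Erᵀ + E * Ptp * Arᵀ = -(Pl * B * Brᵀ * Plrᵀ) ∧
      Ptp = Pr * Ptp * Prrᵀ := by
  set U := Winv * B * Brᵀ
  have hint := matIntegrableIoi_mixedIntegrand J A1r U hα hαr hJ hA1r
  set P := matIntIoi (mixedIntegrand J A1r U)
  have hintegrand : (fun t => FJ t * B * Brᵀ * (FJr t)ᵀ) =
      fun t => Tinv * mixedIntegrand J A1r U t := by
    funext t
    simp only [hFJ, hFJr, mixedIntegrand, blockExp, U, Matrix.mul_assoc]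
  have hPtp' : Ptp = Tinv * P := by rw [hPtp, hintegrand, matIntIoi_const_mul hint]
  have hTTinv (X : Matrix (Fin nf ⊕ Fin ni) (Fin rf ⊕ Fin ri) ℝ) : T * (Tinv * X) = X := by
    rw [← Matrix.mul_assoc, hT, Matrix.one_mul]
  have hPZ (Z : Matrix (Fin ri) (Fin ri) ℝ) :
      P * (fromBlocks (1 : Matrix (Fin rf) (Fin rf) ℝ) 0 0 Z)ᵀ = P :=
    matIntIoi_mixedIntegrand_mul_fromBlocks_one_transpose J A1r U hint Z
  have hZP (Z : Matrix (Fin ni) (Fin ni) ℝ) :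
      fromBlocks (1 : Matrix (Fin nf) (Fin nf) ℝ) 0 0 Z * P = P :=
    fromBlocks_one_mul_matIntIoi_mixedIntegrand J A1r U hint Z
  have hsylvester : fromBlocks J 0 0 (1 : Matrix (Fin ni) (Fin ni) ℝ) * P + P * Arᵀ
      = -mixedIntegrand J A1r U 0 := by
    rw [hAr]
    exact matIntIoi_mixedIntegrand_sylvester J A1r U hα hαr hJ hA1r
  refine ⟨hintegrand ▸ hint.const_mul Tinv, ?_, ?_⟩
  · calc A * Ptp * Erᵀ + E * Ptp * Arᵀ
          = W * (fromBlocks J 0 0 (1 : Matrix (Fin ni) (Fin ni) ℝ) * P + P * Arᵀ) := by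
          rw [hA, hE, hEr, hPtp', Matrix.mul_add]
          simp only [Matrix.mul_assoc, hTTinv, hPZ]
          rw [← Matrix.mul_assoc (fromBlocks 1 0 0 N), hZP]
      _ = -(Pl * B * Brᵀ * Plrᵀ) := by
          rw [hsylvester, hPl, hPlr, mixedIntegrand, blockExp_zero, blockExp_zero]
          simp only [U, Matrix.mul_assoc, Matrix.mul_neg]
  · rw [hPtp', hPr, hPrr]
    simp only [Matrix.mul_assoc, hTTinv, hPZ, hZP]

/-- The mixed proper Gramian `P̃_p = ∫₀^∞ F_J(t)·B·B̂ᵀ·F̂_J(t)ᵀ dt` is well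
defined and solves the projected Sylvester equation
`A·P̃_p·Êᵀ + E·P̃_p·Âᵀ = −P_l·B·B̂ᵀ·P̂_lᵀ` together with `P̃_p = P_r·P̃_p·P̂_rᵀ`. -/
theorem mixed_proper_gramian_sylvester
    {nf ni m : ℕ} (hm : 0 < m) (ν : ℕ) (hν : 0 < ν)
    -- Weierstraß canonical form data for the full-order system
    (W T Winv Tinv : Matrix (Fin nf ⊕ Fin ni) (Fin nf ⊕ Fin ni) ℝ)
    (hW : W * Winv = 1) (hW' : Winv * W = 1)
    (hT : T * Tinv = 1) (hT' : Tinv * T = 1)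
    (J : Matrix (Fin nf) (Fin nf) ℝ) (N : Matrix (Fin ni) (Fin ni) ℝ) (hN : N ^ ν = 0)
    (C α : ℝ) (hC : 0 < C) (hα : 0 < α)
    (hJ : ∀ t : ℝ, 0 ≤ t → opNorm (mexp (t • J)) ≤ C * Real.exp (-α * t))
    (E A : Matrix (Fin nf ⊕ Fin ni) (Fin nf ⊕ Fin ni) ℝ)
    (hE : E = W * fromBlocks 1 0 0 N * T)
    (hA : A = W * fromBlocks J 0 0 1 * T)
    (B : Matrix (Fin nf ⊕ Fin ni) (Fin m) ℝ)
    (M : Matrix (Fin nf ⊕ Fin ni) (Fin nf ⊕ Fin ni) ℝ) (hM : M.IsSymm)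
    -- spectral projectors
    (Pr Pl : Matrix (Fin nf ⊕ Fin ni) (Fin nf ⊕ Fin ni) ℝ)
    (hPr : Pr = Tinv * fromBlocks 1 0 0 0 * T)
    (hPl : Pl = W * fromBlocks 1 0 0 0 * Winv)
    -- fundamental solution matrices
    (FJ : ℝ → Matrix (Fin nf ⊕ Fin ni) (Fin nf ⊕ Fin ni) ℝ)
    (hFJ : ∀ t : ℝ, FJ t = Tinv * fromBlocks (mexp (t • J)) 0 0 0 * Winv)
    (FN : ℕ → Matrix (Fin nf ⊕ Fin ni) (Fin nf ⊕ Fin ni) ℝ)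
    (hFN : ∀ k : ℕ, FN k = Tinv * fromBlocks 0 0 0 (-(N ^ k)) * Winv)
    -- proper and improper controllability Gramians
    (Pp : Matrix (Fin nf ⊕ Fin ni) (Fin nf ⊕ Fin ni) ℝ)
    (hPp : Pp = matIntIoi fun t => FJ t * B * Bᵀ * (FJ t)ᵀ)
    (Pimp : Matrix (Fin nf ⊕ Fin ni) (Fin nf ⊕ Fin ni) ℝ)
    (hPimp : Pimp = ∑ k ∈ Finset.range ν, FN k * B * Bᵀ * (FN k)ᵀ)
    -- reduced-order data
    {rf ri : ℕ}
    (A1r : Matrix (Fin rf) (Fin rf) ℝ) (E2r : Matrix (Fin ri) (Fin ri) ℝ) (hE2r : E2r ^ ν = 0)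
    (Cr αr : ℝ) (hCr : 0 < Cr) (hαr : 0 < αr)
    (hA1r : ∀ t : ℝ, 0 ≤ t → opNorm (mexp (t • A1r)) ≤ Cr * Real.exp (-αr * t))
    (Br : Matrix (Fin rf ⊕ Fin ri) (Fin m) ℝ)
    (Mr : Matrix (Fin rf ⊕ Fin ri) (Fin rf ⊕ Fin ri) ℝ) (hMr : Mr.IsSymm)
    (FJr : ℝ → Matrix (Fin rf ⊕ Fin ri) (Fin rf ⊕ Fin ri) ℝ)
    (hFJr : ∀ t : ℝ, FJr t = fromBlocks (mexp (t • A1r)) 0 0 0)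
    (FNr : ℕ → Matrix (Fin rf ⊕ Fin ri) (Fin rf ⊕ Fin ri) ℝ)
    (hFNr : ∀ k : ℕ, FNr k = fromBlocks 0 0 0 (-(E2r ^ k)))
    -- reduced-order matrices and projectors
    (Er Ar : Matrix (Fin rf ⊕ Fin ri) (Fin rf ⊕ Fin ri) ℝ)
    (hEr : Er = fromBlocks 1 0 0 E2r) (hAr : Ar = fromBlocks A1r 0 0 1)
    (Plr Prr : Matrix (Fin rf ⊕ Fin ri) (Fin rf ⊕ Fin ri) ℝ)
    (hPlr : Plr = fromBlocks 1 0 0 0) (hPrr : Prr = fromBlocks 1 0 0 0)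
    -- the mixed proper Gramian
    (Ptp : Matrix (Fin nf ⊕ Fin ni) (Fin rf ⊕ Fin ri) ℝ)
    (hPtp : Ptp = matIntIoi fun t => FJ t * B * Brᵀ * (FJr t)ᵀ) :
    MatIntegrableIoi (fun t => FJ t * B * Brᵀ * (FJr t)ᵀ) ∧
      A * Ptp * Erᵀ + E * Ptp * Arᵀ = -(Pl * B * Brᵀ * Plrᵀ) ∧
      Ptp = Pr * Ptp * Prrᵀ :=
  mixed_proper_gramian_sylvester_general W T Winv Tinv hT J N C α hα hJ E A hE hA B Pr Pl hPr hPl FJ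
    hFJ A1r E2r Cr αr hαr hA1r Br FJr hFJr Er Ar hEr hAr Plr Prr hPlr hPrr Ptp hPtp
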